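/- arXiv:2104.04753 — 2 statements merged into one kernel-verified Lean document; each statement's English description precedes it below -/
import Mathlib

section
/- Let a2 ≤ a3 ≤ a4 be pairwise coprime positive integers with a2*a3*a4 dividing a2 + a3 + a4 + 1. Then a2 = 1 and either a3 = 1, or (a3,a4) = (2,3). -/
theorem stmt_5 (a2 a3 a4 : ℕ) (h2 : 0 < a2) (h3 : 0 < a3) (h4 : 0 < a4)
    (h23 : a2 ≤ a3) (h34 : a3 ≤ a4)
    (hcop23 : Nat.Coprime a2 a3) (hcop24 : Nat.Coprime a2 a4) (hcop34 : Nat.Coprime a3 a4)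
    (hdvd : a2 * a3 * a4 ∣ a2 + a3 + a4 + 1) :
    a2 = 1 ∧ (a3 = 1 ∨ (a3 = 2 ∧ a4 = 3)) := by
  have hle : a2 * a3 * a4 ≤ a2 + a3 + a4 + 1 := Nat.le_of_dvd (by omega) hdvd
  have hle' : a2 * (a3 * a4) ≤ a2 + a3 + a4 + 1 := by rwa [mul_assoc] at hle
  have key : a3 * a4 ≤ a2 + a3 + a4 + 1 :=
    le_trans (Nat.le_mul_of_pos_left _ h2) hle'
  have ha3 : a3 ≤ 4 := by nlinarith
  have ha2 : a2 ≤ 4 := le_trans h23 ha3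
  interval_cases a2 <;> interval_cases a3 <;>
    first
    | omega
    | (exfalso; revert hcop23; decide)
    | (have hb : a4 ≤ 10 := by omega
       interval_cases a4 <;>
         first
         | omega
         | (exfalso; revert hcop34; decide)
         | (exfalso; revert hcop24; decide))
end

section
/- Let a1, a2, a3, a5, b1, b2 be positive integers satisfying a2(a1·a3 − 1) + a1(a3·a5·b2 − 1) + a3(a2·a5·b1 − 1) + a5(a3·a5·b1·b2 − 1) = 1. Then b1 = b2 = a3 = 1 and at least one of a1, a2 equals 1. -/
theorem stmt_9 (a1 a2 a3 a5 b1 b2 : ℤ)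
    (h1 : 1 ≤ a1) (h2 : 1 ≤ a2) (h3 : 1 ≤ a3) (h5 : 1 ≤ a5) (hb1 : 1 ≤ b1) (hb2 : 1 ≤ b2)
    (h : a2 * (a1 * a3 - 1) + a1 * (a3 * a5 * b2 - 1) + a3 * (a2 * a5 * b1 - 1)
        + a5 * (a3 * a5 * b1 * b2 - 1) = 1) :
    b1 = 1 ∧ b2 = 1 ∧ a3 = 1 ∧ (a1 = 1 ∨ a2 = 1) := by
  have m13 : (1:ℤ) ≤ a1 * a3 := le_trans h1 (le_mul_of_one_le_right (by linarith) h3)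
  have m35 : (1:ℤ) ≤ a3 * a5 := le_trans h3 (le_mul_of_one_le_right (by linarith) h5)
  have m352 : (1:ℤ) ≤ a3 * a5 * b2 := le_trans m35 (le_mul_of_one_le_right (by linarith) hb2)
  have m25 : (1:ℤ) ≤ a2 * a5 := le_trans h2 (le_mul_of_one_le_right (by linarith) h5)
  have m251 : (1:ℤ) ≤ a2 * a5 * b1 := le_trans m25 (le_mul_of_one_le_right (by linarith) hb1)
  have m351 : (1:ℤ) ≤ a3 * a5 * b1 := le_trans m35 (le_mul_of_one_le_right (by linarith) hb1)
  have m3512 : (1:ℤ) ≤ a3 * a5 * b1 * b2 :=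
    le_trans m351 (le_mul_of_one_le_right (by linarith) hb2)
  have t1 : 0 ≤ a2 * (a1 * a3 - 1) := mul_nonneg (by linarith) (by linarith)
  have t2 : 0 ≤ a1 * (a3 * a5 * b2 - 1) := mul_nonneg (by linarith) (by linarith)
  have t3 : 0 ≤ a3 * (a2 * a5 * b1 - 1) := mul_nonneg (by linarith) (by linarith)
  have t4 : 0 ≤ a5 * (a3 * a5 * b1 * b2 - 1) := mul_nonneg (by linarith) (by linarith)
  have e1 : a2 * (a1 * a3 - 1) ≤ 1 := by linarith
  have e2 : a1 * (a3 * a5 * b2 - 1) ≤ 1 := by linarith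
  have e3 : a3 * (a2 * a5 * b1 - 1) ≤ 1 := by linarith
  have e4 : a5 * (a3 * a5 * b1 * b2 - 1) ≤ 1 := by linarith
  -- from e4: product bound
  have hp : a3 * a5 * b1 * b2 ≤ 2 := by
    have : a3 * a5 * b1 * b2 - 1 ≤ a5 * (a3 * a5 * b1 * b2 - 1) :=
      le_mul_of_one_le_left (by linarith) h5
    linarith
  have ha3 : a3 ≤ 2 := by
    have : a3 ≤ a3 * a5 * b1 * b2 :=
      calc a3 ≤ a3 * a5 := le_mul_of_one_le_right (by linarith) h5
        _ ≤ a3 * a5 * b1 := le_mul_of_one_le_right (by linarith) hb1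
        _ ≤ a3 * a5 * b1 * b2 := le_mul_of_one_le_right (by linarith) hb2
    linarith
  have ha5 : a5 ≤ 2 := by
    have : a5 ≤ a3 * a5 * b1 * b2 :=
      calc a5 ≤ a3 * a5 := le_mul_of_one_le_left (by linarith) h3
        _ ≤ a3 * a5 * b1 := le_mul_of_one_le_right (by linarith) hb1
        _ ≤ a3 * a5 * b1 * b2 := le_mul_of_one_le_right (by linarith) hb2
    linarith
  have hB1 : b1 ≤ 2 := by
    have : b1 ≤ a3 * a5 * b1 * b2 :=
      calc b1 ≤ a3 * a5 * b1 := le_mul_of_one_le_left (by linarith) m35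
        _ ≤ a3 * a5 * b1 * b2 := le_mul_of_one_le_right (by linarith) hb2
    linarith
  have hB2 : b2 ≤ 2 := by
    have : b2 ≤ a3 * a5 * b1 * b2 := le_mul_of_one_le_left (by linarith) m351
    linarith
  -- from e3: a2*a5*b1 ≤ 2
  have hr : a2 * a5 * b1 ≤ 2 := by
    have : a2 * a5 * b1 - 1 ≤ a3 * (a2 * a5 * b1 - 1) :=
      le_mul_of_one_le_left (by linarith) h3
    linarith
  have ha2 : a2 ≤ 2 := by
    have : a2 ≤ a2 * a5 * b1 :=
      calc a2 ≤ a2 * a5 := le_mul_of_one_le_right (by linarith) h5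
        _ ≤ a2 * a5 * b1 := le_mul_of_one_le_right (by linarith) hb1
    linarith
  have ha1 : a1 ≤ 2 := by
    by_cases hc : 2 ≤ a3 * a5 * b2
    · have : a1 ≤ a1 * (a3 * a5 * b2 - 1) :=
        le_mul_of_one_le_right (by linarith) (by linarith)
      linarith
    · have hx : a3 * a5 * b2 = 1 := le_antisymm (by linarith) m352
      have ha3' : a3 ≤ 1 := by
        have : a3 ≤ a3 * a5 * b2 :=
          calc a3 ≤ a3 * a5 := le_mul_of_one_le_right (by linarith) h5
            _ ≤ a3 * a5 * b2 := le_mul_of_one_le_right (by linarith) hb2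
        linarith
      have ha3e : a3 = 1 := le_antisymm ha3' h3
      have : a1 - 1 ≤ a2 * (a1 - 1) := le_mul_of_one_le_left (by linarith) h2
      rw [ha3e] at e1
      simp only [mul_one] at e1
      linarith
  interval_cases a1 <;> interval_cases a2 <;> interval_cases a3 <;>
    interval_cases a5 <;> interval_cases b1 <;> interval_cases b2 <;> omega
end
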